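/- For every t ∈ ℝ and every x ∈ X_or, the vector (Matrix.exp ℝ (t • A)).mulVec x belongs to X_or; that is, the flow of the uncontrolled linear dynamics ẋ = Ax preserves the group-consensus subspace. -/

import Mathlib

open Matrix

/-! `X_or` is the common fixed space of the permutation matrices `P_σ`, `σ ∈ G`, so it is
invariant under every matrix commuting with all `P_σ`; `exp (t • A)` is such a matrix because
`A` is. -/

/-- The `N × N` permutation matrix of a permutation `σ` of `Fin N`, with the convention
`(permMat N σ).mulVec x i = x (σ⁻¹ i)`. -/
def permMat (N : ℕ) (σ : Equiv.Perm (Fin N)) : Matrix (Fin N) (Fin N) ℝ :=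
  Matrix.of fun i j => if σ j = i then (1 : ℝ) else 0

/-- The group-consensus subspace: vectors that are constant on each orbit of the natural
action of the subgroup `G` of permutations of `Fin N`. -/
def consensusSet (N : ℕ) (G : Subgroup (Equiv.Perm (Fin N))) : Set (Fin N → ℝ) :=
  {x | ∀ i j : Fin N, (∃ σ ∈ G, σ i = j) → x i = x j}

theorem permMat_mulVec_apply (N : ℕ) (σ : Equiv.Perm (Fin N)) (x : Fin N → ℝ) (i : Fin N) :
    (permMat N σ *ᵥ x) i = x (σ⁻¹ i) := by
  simp only [permMat, mulVec, dotProduct, of_apply, ite_mul, one_mul, zero_mul,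
    ← Equiv.Perm.eq_inv_iff_eq, Finset.sum_ite_eq', Finset.mem_univ, if_true]

theorem mem_consensusSet_iff {N : ℕ} {G : Subgroup (Equiv.Perm (Fin N))} {x : Fin N → ℝ} :
    x ∈ consensusSet N G ↔ ∀ σ ∈ G, permMat N σ *ᵥ x = x := by
  constructor
  · intro hx σ hσ
    funext i
    rw [permMat_mulVec_apply]
    exact hx (σ⁻¹ i) i ⟨σ, hσ, σ.apply_symm_apply i⟩
  · rintro hx i j ⟨σ, hσ, rfl⟩
    simpa [permMat_mulVec_apply] using congrFun (hx σ hσ) (σ i)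

theorem mulVec_mem_consensusSet {N : ℕ} {G : Subgroup (Equiv.Perm (Fin N))}
    {M : Matrix (Fin N) (Fin N) ℝ} (hM : ∀ σ ∈ G, Commute (permMat N σ) M) {x : Fin N → ℝ}
    (hx : x ∈ consensusSet N G) : M *ᵥ x ∈ consensusSet N G := by
  rw [mem_consensusSet_iff] at hx ⊢
  intro σ hσ
  rw [mulVec_mulVec, (hM σ hσ).eq, ← mulVec_mulVec, hx σ hσ]

/-- The flow of the uncontrolled linear dynamics `ẋ = Ax` preserves the group-consensus
subspace: for every `t` and every `x ∈ X_or`, `(exp (t • A)).mulVec x ∈ X_or`. -/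
theorem matrix_exp_preserves_consensus (N : ℕ) (A : Matrix (Fin N) (Fin N) ℝ)
    (G : Subgroup (Equiv.Perm (Fin N)))
    (hA : ∀ σ ∈ G, permMat N σ * A = A * permMat N σ) :
    ∀ (t : ℝ), ∀ x ∈ consensusSet N G,
      (NormedSpace.exp (t • A)).mulVec x ∈ consensusSet N G := by
  intro t x hx
  refine mulVec_mem_consensusSet (fun σ hσ => ?_) hx
  exact (Commute.smul_right (hA σ hσ) t).exp_right
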